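/- arXiv:1109.6088 — 2 statements merged into one kernel-verified Lean document; each statement's English description precedes it below -/
import Mathlib

section
/- Let $k,m\in\mathbb{R}^3$ with $|k|_h,|m|_h\neq 0$, $n=k+m$ with $|n|_h\neq 0$, and suppose $\lambda>0$ satisfies $k_3=|k|_h/\sqrt{\lambda}$ and $m_3=|m|_h/\sqrt{\lambda}$ (so that $\omega_k=\omega_m$). Then the following cancellation identity holds: $(q^1_k\cdot m)(q^{-1}_m\cdot q^{0*}_n) + (q^{-1}_m\cdot k)(q^1_k\cdot q^{0*}_n) = 0$, where $\cdot$ denotes the bilinear (non-conjugated) dot product on $\mathbb{C}^4$, $m$ and $k$ are identified with $(m_1,m_2,m_3,0)$ and $(k_1,k_2,k_3,0)$, and $q^{0*}_n = q^0_n$. -/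
noncomputable section

/-- Bilinear (non-conjugated) dot product on ℂ⁴. -/
def bdot (u v : Fin 4 → ℂ) : ℂ := ∑ j : Fin 4, u j * v j

set_option maxHeartbeats 2000000 in
theorem cancellation_identity (k1 k2 k3 m1 m2 m3 lam : ℝ)
    (kh mh nh kk mm : ℝ)
    (hkh_def : kh = Real.sqrt (k1 ^ 2 + k2 ^ 2))
    (hmh_def : mh = Real.sqrt (m1 ^ 2 + m2 ^ 2))
    (hnh_def : nh = Real.sqrt ((k1 + m1) ^ 2 + (k2 + m2) ^ 2))
    (hkk_def : kk = Real.sqrt (k1 ^ 2 + k2 ^ 2 + k3 ^ 2))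
    (hmm_def : mm = Real.sqrt (m1 ^ 2 + m2 ^ 2 + m3 ^ 2))
    (hkh : kh ≠ 0) (hmh : mh ≠ 0) (hnh : nh ≠ 0)
    (hlam : 0 < lam)
    (hk3 : k3 = kh / Real.sqrt lam) (hm3 : m3 = mh / Real.sqrt lam)
    (ωk ωm : ℝ) (hωk : ωk = kh / kk) (hωm : ωm = mh / mm)
    (q1k qm1m q0n kvec mvec : Fin 4 → ℂ)
    (hq1k : q1k = fun j => (1 / (Real.sqrt 2 * kh ^ 2) : ℝ) *
      ![Complex.I * (ωk : ℂ) * (k1 : ℂ) * (k3 : ℂ),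
        Complex.I * (ωk : ℂ) * (k2 : ℂ) * (k3 : ℂ),
        -Complex.I * ((kh : ℂ) ^ 2) * (ωk : ℂ),
        ((kh : ℂ) ^ 2)] j)
    (hqm1m : qm1m = fun j => (1 / (Real.sqrt 2 * mh ^ 2) : ℝ) *
      ![-(Complex.I * (ωm : ℂ) * (m1 : ℂ) * (m3 : ℂ)),
        -(Complex.I * (ωm : ℂ) * (m2 : ℂ) * (m3 : ℂ)),
        Complex.I * ((mh : ℂ) ^ 2) * (ωm : ℂ),
        ((mh : ℂ) ^ 2)] j)
    (hq0n : q0n = fun j => (1 / nh : ℝ) *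
      ![(-(k2 + m2) : ℂ), ((k1 + m1) : ℂ), 0, 0] j)
    (hkvec : kvec = ![(k1 : ℂ), (k2 : ℂ), (k3 : ℂ), 0])
    (hmvec : mvec = ![(m1 : ℂ), (m2 : ℂ), (m3 : ℂ), 0]) :
    bdot q1k mvec * bdot qm1m q0n + bdot qm1m kvec * bdot q1k q0n = 0 := by
  have hs : Real.sqrt lam ≠ 0 := Real.sqrt_ne_zero'.mpr hlam
  subst hk3 hm3 hq1k hqm1m hq0n hkvec hmvec hωk hωm
  simp only [bdot, Fin.sum_univ_four, Matrix.cons_val_zero, Matrix.cons_val_one,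
    Matrix.head_cons, Matrix.cons_val_two, Matrix.tail_cons, Matrix.cons_val_three]
  have h2 : (Real.sqrt 2 : ℂ) ≠ 0 := by
    exact_mod_cast Real.sqrt_ne_zero'.mpr (by norm_num)
  have hkh' : (kh : ℂ) ≠ 0 := by exact_mod_cast hkh
  have hmh' : (mh : ℂ) ≠ 0 := by exact_mod_cast hmh
  have hnh' : (nh : ℂ) ≠ 0 := by exact_mod_cast hnh
  have hs' : (Real.sqrt lam : ℂ) ≠ 0 := by exact_mod_cast hs
  push_cast
  field_simp
  ring
end
end

section
/- (Restricted convolution count.) There is a constant $C>0$ such that for every $i\in\mathbb{N}$ and every $n\in\mathbb{Z}^3$ with $|n|_h\neq 0$: $\sum_{k\in\mathbb{Z}^3,\ 2^i\le |k|\le 2^{i+1},\ \chi(n,k,-n-k)=1} |k|^{-1} \le C\, 2^i$, where $\chi(n,k,m)=1$ if $P_{nkm}(1)=0$ and $\chi=0$ otherwise. -/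
noncomputable section
open scoped Classical

/-- Euclidean norm of an integer lattice point in ℤ³. -/
def znorm (n : Fin 3 → ℤ) : ℝ :=
  Real.sqrt (((n 0 : ℝ)) ^ 2 + ((n 1 : ℝ)) ^ 2 + ((n 2 : ℝ)) ^ 2)

/-- The resonance polynomial `P_{n,k,m}(1)` for `n, k, m ∈ ℤ³`. -/
def resP (n k m : Fin 3 → ℤ) : ℝ :=
  let nh2 : ℝ := (n 0 : ℝ) ^ 2 + (n 1 : ℝ) ^ 2
  let nn2 : ℝ := (n 0 : ℝ) ^ 2 + (n 1 : ℝ) ^ 2 + (n 2 : ℝ) ^ 2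
  let kh2 : ℝ := (k 0 : ℝ) ^ 2 + (k 1 : ℝ) ^ 2
  let kk2 : ℝ := (k 0 : ℝ) ^ 2 + (k 1 : ℝ) ^ 2 + (k 2 : ℝ) ^ 2
  let mh2 : ℝ := (m 0 : ℝ) ^ 2 + (m 1 : ℝ) ^ 2
  let mm2 : ℝ := (m 0 : ℝ) ^ 2 + (m 1 : ℝ) ^ 2 + (m 2 : ℝ) ^ 2
  nh2 ^ 2 * kk2 ^ 2 * mm2 ^ 2 + nn2 ^ 2 * kh2 ^ 2 * mm2 ^ 2 + nn2 ^ 2 * kk2 ^ 2 * mh2 ^ 2 -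
    2 * nn2 * nh2 * kk2 * kh2 * mm2 ^ 2 - 2 * nn2 * nh2 * kk2 ^ 2 * mm2 * mh2 -
    2 * nn2 ^ 2 * kk2 * kh2 * mm2 * mh2

open Polynomial in
/-- The resonance expression as a polynomial in the third coordinate of `k`. -/
def fiberPoly (A N K Mh t : ℝ) : Polynomial ℝ :=
  C (A^2) * (C K + X^2)^2 * (C Mh + (X + C t)^2)^2
  + C (N^2*K^2) * (C Mh + (X + C t)^2)^2
  + C (N^2*Mh^2) * (C K + X^2)^2
  - C (2*N*A*K) * (C K + X^2) * (C Mh + (X + C t)^2)^2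
  - C (2*N*A*Mh) * (C K + X^2)^2 * (C Mh + (X + C t)^2)
  - C (2*N^2*K*Mh) * (C K + X^2) * (C Mh + (X + C t)^2)

lemma fiberPoly_natDegree_le (A N K Mh t : ℝ) : (fiberPoly A N K Mh t).natDegree ≤ 8 := by
  unfold fiberPoly; compute_degree

lemma fiberPoly_coeff8 (A N K Mh t : ℝ) : (fiberPoly A N K Mh t).coeff 8 = A^2 := by
  unfold fiberPoly; compute_degree!

lemma fiberPoly_ne_zero (A N K Mh t : ℝ) (hA : A ≠ 0) : fiberPoly A N K Mh t ≠ 0 := by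
  intro h
  have := fiberPoly_coeff8 A N K Mh t
  rw [h] at this
  simp at this
  exact hA (pow_eq_zero_iff (by norm_num) |>.mp this.symm)

lemma fiberPoly_roots_card (A N K Mh t : ℝ) :
    (fiberPoly A N K Mh t).roots.toFinset.card ≤ 8 :=
  le_trans (Multiset.toFinset_card_le _)
    (le_trans (Polynomial.card_roots' _) (fiberPoly_natDegree_le A N K Mh t))

lemma resP_eval (n k : Fin 3 → ℤ) :
    resP n k (-n - k) =
      (fiberPoly ((n 0:ℝ)^2+(n 1:ℝ)^2) ((n 0:ℝ)^2+(n 1:ℝ)^2+(n 2:ℝ)^2)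
        ((k 0:ℝ)^2+(k 1:ℝ)^2) (((n 0:ℝ)+(k 0:ℝ))^2+((n 1:ℝ)+(k 1:ℝ))^2)
        ((n 2 : ℝ))).eval ((k 2 : ℤ) : ℝ) := by
  simp only [resP, fiberPoly, Pi.sub_apply, Pi.neg_apply, Polynomial.eval_add,
    Polynomial.eval_sub, Polynomial.eval_mul, Polynomial.eval_pow, Polynomial.eval_C,
    Polynomial.eval_X]
  push_cast
  ring

lemma abs_le_znorm (k : Fin 3 → ℤ) (j : Fin 3) : |((k j : ℤ) : ℝ)| ≤ znorm k := by
  rw [← Real.sqrt_sq_eq_abs]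
  apply Real.sqrt_le_sqrt
  fin_cases j <;> simp <;>
    nlinarith [sq_nonneg ((k 0 : ℤ) : ℝ), sq_nonneg ((k 1 : ℤ) : ℝ), sq_nonneg ((k 2 : ℤ) : ℝ)]

theorem restricted_convolution_count :
    ∃ C : ℝ, 0 < C ∧
      ∀ i : ℕ, ∀ n : Fin 3 → ℤ, ¬(n 0 = 0 ∧ n 1 = 0) →
        (∑' k : Fin 3 → ℤ,
            (if (2 : ℝ) ^ i ≤ znorm k ∧ znorm k ≤ (2 : ℝ) ^ (i + 1) ∧
                resP n k (-n - k) = 0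
              then (znorm k)⁻¹ else 0)) ≤ C * 2 ^ i := by
  refine ⟨512, by norm_num, ?_⟩
  intro i n hn
  -- horizontal part of n is nonzero
  have hA : ((n 0:ℝ)^2+(n 1:ℝ)^2) ≠ 0 := by
    rcases not_and_or.mp hn with h | h
    · have h0 : ((n 0 : ℤ) : ℝ) ≠ 0 := Int.cast_ne_zero.mpr h
      nlinarith [sq_nonneg ((n 1 : ℤ) : ℝ), sq_abs ((n 0 : ℤ) : ℝ), abs_pos.mpr h0,
        mul_pos (abs_pos.mpr h0) (abs_pos.mpr h0)]
    · have h0 : ((n 1 : ℤ) : ℝ) ≠ 0 := Int.cast_ne_zero.mpr h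
      nlinarith [sq_nonneg ((n 0 : ℤ) : ℝ), sq_abs ((n 1 : ℤ) : ℝ), abs_pos.mpr h0,
        mul_pos (abs_pos.mpr h0) (abs_pos.mpr h0)]
  set M : ℤ := 2^(i+1) with hM
  have hMcast : ((M : ℤ) : ℝ) = (2:ℝ)^(i+1) := by push_cast [hM]; norm_num
  set S : Finset (Fin 3 → ℤ) := Fintype.piFinset fun _ : Fin 3 => Finset.Icc (-M) M with hS
  set cond : (Fin 3 → ℤ) → Prop := fun k =>
    (2 : ℝ) ^ i ≤ znorm k ∧ znorm k ≤ (2 : ℝ) ^ (i + 1) ∧ resP n k (-n - k) = 0 with hcond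
  -- the summand vanishes off S
  have hvanish : ∀ k ∉ S, (if cond k then (znorm k)⁻¹ else 0) = 0 := by
    intro k hk
    rw [if_neg]
    rintro ⟨-, h2, -⟩
    rw [hS, Fintype.mem_piFinset] at hk
    push_neg at hk
    obtain ⟨j, hj⟩ := hk
    rw [Finset.mem_Icc] at hj
    have habs : k j < -M ∨ M < k j := by omega
    have hlt : ((M:ℤ):ℝ) < |((k j : ℤ) : ℝ)| := by
      rcases habs with h | h
      · have : ((k j : ℤ) : ℝ) < -((M:ℤ):ℝ) := by exact_mod_cast h
        calc ((M:ℤ):ℝ) < -((k j : ℤ) : ℝ) := by linarith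
          _ ≤ |((k j : ℤ) : ℝ)| := neg_le_abs _
      · calc ((M:ℤ):ℝ) < ((k j : ℤ) : ℝ) := by exact_mod_cast h
          _ ≤ |((k j : ℤ) : ℝ)| := le_abs_self _
    have := lt_of_lt_of_le hlt (abs_le_znorm k j)
    rw [hMcast] at this
    linarith
  rw [tsum_eq_sum hvanish]
  -- pointwise bound
  have hpt : ∀ k ∈ S, (if cond k then (znorm k)⁻¹ else 0) ≤
      (if cond k then ((2:ℝ)^i)⁻¹ else 0) := by
    intro k _
    split_ifs with h
    · exact inv_anti₀ (by positivity) h.1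
    · exact le_refl 0
  refine le_trans (Finset.sum_le_sum hpt) ?_
  rw [← Finset.sum_filter, Finset.sum_const, nsmul_eq_mul]
  -- cardinality bound
  set Q : (Fin 3 → ℤ) → Prop := fun k => resP n k (-n - k) = 0 with hQ
  have hsub : (S.filter cond) ⊆ S.filter Q := by
    intro k hk
    rw [Finset.mem_filter] at hk ⊢
    exact ⟨hk.1, hk.2.2.2⟩
  set g : (Fin 3 → ℤ) → ℤ × ℤ := fun k => (k 0, k 1) with hg
  have hfib : ∀ ab ∈ (S.filter Q).image g,
      ((S.filter Q).filter fun k => g k = ab).card ≤ 8 := by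
    intro ab _
    set pp := fiberPoly ((n 0:ℝ)^2+(n 1:ℝ)^2) ((n 0:ℝ)^2+(n 1:ℝ)^2+(n 2:ℝ)^2)
      ((ab.1:ℝ)^2+(ab.2:ℝ)^2) (((n 0:ℝ)+(ab.1:ℝ))^2+((n 1:ℝ)+(ab.2:ℝ))^2) ((n 2 : ℝ)) with hpp
    have hppne : pp ≠ 0 := fiberPoly_ne_zero _ _ _ _ _ hA
    have key : ∀ k ∈ (S.filter Q).filter fun k => g k = ab,
        ((k 2 : ℤ) : ℝ) ∈ pp.roots.toFinset := by
      intro k hk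
      rw [Finset.mem_filter, Finset.mem_filter] at hk
      obtain ⟨⟨-, hQk⟩, hgk⟩ := hk
      have h0 : k 0 = ab.1 := congrArg Prod.fst hgk
      have h1 : k 1 = ab.2 := congrArg Prod.snd hgk
      have := resP_eval n k
      rw [hQ] at hQk
      rw [hQk, h0, h1] at this
      rw [Multiset.mem_toFinset, Polynomial.mem_roots']
      exact ⟨hppne, this.symm⟩
    have hinj : Set.InjOn (fun k : Fin 3 → ℤ => ((k 2 : ℤ) : ℝ))
        ((S.filter Q).filter fun k => g k = ab) := by
      intro x hx y hy hxy
      rw [Finset.coe_filter, Set.mem_setOf_eq] at hx hy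
      have hx0 : x 0 = ab.1 := congrArg Prod.fst hx.2
      have hx1 : x 1 = ab.2 := congrArg Prod.snd hx.2
      have hy0 : y 0 = ab.1 := congrArg Prod.fst hy.2
      have hy1 : y 1 = ab.2 := congrArg Prod.snd hy.2
      have h2 : x 2 = y 2 := by
        have := hxy
        simp only at this
        exact_mod_cast this
      funext j
      fin_cases j
      · exact hx0.trans hy0.symm
      · exact hx1.trans hy1.symm
      · exact h2
    calc ((S.filter Q).filter fun k => g k = ab).card
        ≤ pp.roots.toFinset.card := Finset.card_le_card_of_injOn _ key hinj
      _ ≤ 8 := fiberPoly_roots_card _ _ _ _ _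
  have hcard2 : (S.filter Q).card ≤ 8 * ((S.filter Q).image g).card :=
    Finset.card_le_mul_card_image _ 8 hfib
  have hIcc : (Finset.Icc (-M) M).card ≤ 2^(i+3) := by
    rw [Int.card_Icc]
    rw [Int.toNat_le]
    have e1 : (2:ℤ)^(i+2) = 2^(i+1)*2 := pow_succ 2 (i+1)
    have e2 : (2:ℤ)^(i+3) = 2^(i+2)*2 := pow_succ 2 (i+2)
    have hp : (0:ℤ) < 2^(i+1) := pow_pos (by norm_num) _
    push_cast [hM]
    linarith
  have himg : ((S.filter Q).image g).card ≤ 2^(i+3) * 2^(i+3) := by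
    have hsub2 : (S.filter Q).image g ⊆ (Finset.Icc (-M) M) ×ˢ (Finset.Icc (-M) M) := by
      intro ab hab
      rw [Finset.mem_image] at hab
      obtain ⟨k, hk, hgk⟩ := hab
      have hkS := (Finset.mem_filter.mp hk).1
      rw [hS, Fintype.mem_piFinset] at hkS
      rw [Finset.mem_product, ← hgk]
      exact ⟨hkS 0, hkS 1⟩
    calc ((S.filter Q).image g).card
        ≤ ((Finset.Icc (-M) M) ×ˢ (Finset.Icc (-M) M)).card := Finset.card_le_card hsub2
      _ = (Finset.Icc (-M) M).card * (Finset.Icc (-M) M).card := Finset.card_product _ _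
      _ ≤ 2^(i+3) * 2^(i+3) := Nat.mul_le_mul hIcc hIcc
  have hcardN : (S.filter cond).card ≤ 8 * (2^(i+3) * 2^(i+3)) :=
    le_trans (Finset.card_le_card hsub)
      (le_trans hcard2 (Nat.mul_le_mul_left 8 himg))
  have hfin : ((8 * (2^(i+3) * 2^(i+3)) : ℕ) : ℝ) * ((2:ℝ)^i)⁻¹ = 512 * 2^i := by
    have h2 : ((2:ℝ)^i) ≠ 0 := by positivity
    push_cast
    field_simp
    ring
  calc ((S.filter cond).card : ℝ) * ((2:ℝ)^i)⁻¹
      ≤ ((8 * (2^(i+3) * 2^(i+3)) : ℕ) : ℝ) * ((2:ℝ)^i)⁻¹ :=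
        mul_le_mul_of_nonneg_right (Nat.cast_le.mpr hcardN) (by positivity)
    _ = 512 * 2^i := hfin
end
end
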